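/- arXiv:1603.05116 — 2 statements merged into one kernel-verified Lean document; each statement's English description precedes it below -/
import Mathlib

section
/- Let G be a finite simple graph and let G' be a graph obtained from G by adding k edges (i.e., G and G' have the same vertex set, G is a subgraph of G', and the edge set of G' has exactly k more edges than that of G). Then γ_gr(G) - k ≤ γ_gr(G') ≤ γ_gr(G) + k. -/
/-- The closed neighborhood `N[v] = {v} ∪ N(v)` of a vertex. -/
def closedNbhd {V : Type*} (G : SimpleGraph V) (v : V) : Set V :=
  insert v (G.neighborSet v)

/-- A sequence (list) of pairwise distinct vertices is legal if each vertex
footprints some vertex not dominated by the previous ones. -/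
def IsLegalSeq {V : Type*} (G : SimpleGraph V) (l : List V) : Prop :=
  l.Nodup ∧ ∀ i : Fin l.length, ∃ u,
    u ∈ closedNbhd G (l.get i) ∧
    ∀ j : Fin l.length, (j : ℕ) < (i : ℕ) → u ∉ closedNbhd G (l.get j)

/-- A legal dominating sequence. -/
def IsDomSeq {V : Type*} (G : SimpleGraph V) (l : List V) : Prop :=
  IsLegalSeq G l ∧ ∀ u : V, ∃ v ∈ l, u ∈ closedNbhd G v

/-- The Grundy domination number: the maximum length of a legal dominating sequence. -/
noncomputable def grundyDomNum {V : Type*} (G : SimpleGraph V) : ℕ :=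
  sSup {k : ℕ | ∃ l : List V, IsDomSeq G l ∧ l.length = k}


/-!
Adding a single edge `e` changes `γ_gr` by at most one; the theorem follows by adding the `k`
edges one at a time. For one edge, fix a legal sequence of one of the two graphs and a footprint of
each of its vertices. In the other graph every footprint that fails is an endpoint of `e`, and two
failures would contradict legality, so deleting the one failing vertex leaves a legal sequence
there.
-/

section

open SimpleGraph

variable {V : Type*} {G G' : SimpleGraph V}

lemma self_mem_closedNbhd (G : SimpleGraph V) (v : V) : v ∈ closedNbhd G v :=
  Set.mem_insert _ _

lemma mem_closedNbhd_iff {v u : V} : u ∈ closedNbhd G v ↔ u = v ∨ G.Adj v u := by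
  simp [closedNbhd, mem_neighborSet]

lemma closedNbhd_mono (hle : G ≤ G') (v : V) : closedNbhd G v ⊆ closedNbhd G' v :=
  Set.insert_subset_insert fun _ h => hle h

lemma sym2_eq_of_mem_closedNbhd_of_not_mem {e : Sym2 V} (hE : G'.edgeSet \ G.edgeSet ⊆ {e})
    {v u : V} (h' : u ∈ closedNbhd G' v) (h : u ∉ closedNbhd G v) : s(v, u) = e := by
  rcases mem_closedNbhd_iff.mp h' with rfl | hadj
  · exact absurd (self_mem_closedNbhd G u) h
  · exact hE ⟨hadj, fun hG => h (mem_closedNbhd_iff.mpr (Or.inr hG))⟩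

def Footprints (G : SimpleGraph V) (l : List V) (i : Fin l.length) (u : V) : Prop :=
  u ∈ closedNbhd G (l.get i) ∧ ∀ j : Fin l.length, j < i → u ∉ closedNbhd G (l.get j)

lemma isLegalSeq_nil : IsLegalSeq G ([] : List V) :=
  ⟨List.nodup_nil, fun i => i.elim0⟩

lemma IsLegalSeq.of_sublist {l l' : List V} (hsub : l'.Sublist l) (hnd : l.Nodup)
    (w : Fin l.length → V) (hw : ∀ i, l.get i ∈ l' → Footprints G l i (w i)) :
    IsLegalSeq G l' := by
  obtain ⟨f, hf⟩ := List.sublist_iff_exists_fin_orderEmbedding_get_eq.mp hsub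
  refine ⟨hsub.nodup hnd, fun i => ⟨w (f i), ?_⟩⟩
  obtain ⟨hdom, hfirst⟩ := hw (f i) (hf i ▸ l'.get_mem i)
  refine ⟨hf i ▸ hdom, fun j hj => hf j ▸ hfirst (f j) (f.strictMono hj)⟩

lemma exists_isLegalSeq_of_footprints_except_one {l : List V} (hnd : l.Nodup)
    (w : Fin l.length → V)
    (hbad : ∀ i₁ i₂, i₁ < i₂ → ¬ Footprints G l i₁ (w i₁) → ¬ Footprints G l i₂ (w i₂) → False) :
    ∃ l', IsLegalSeq G l' ∧ l.length ≤ l'.length + 1 := by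
  classical
  by_cases hall : ∀ i, Footprints G l i (w i)
  · exact ⟨l, ⟨hnd, fun i => ⟨w i, hall i⟩⟩, by omega⟩
  push Not at hall
  obtain ⟨i₀, hi₀⟩ := hall
  refine ⟨l.erase (l.get i₀), IsLegalSeq.of_sublist l.erase_sublist hnd w fun i hmem => ?_, ?_⟩
  · by_contra hi
    have hne : i ≠ i₀ := fun h => (hnd.mem_erase_iff.mp hmem).1 (congrArg l.get h)
    rcases lt_or_gt_of_ne hne with h | h
    exacts [hbad i i₀ h hi hi₀, hbad i₀ i h hi₀ hi]
  · have := List.length_erase_add_one (l.get_mem i₀)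
    omega

lemma IsLegalSeq.append_singleton {l : List V} (hl : IsLegalSeq G l) {u : V}
    (hu : ∀ v ∈ l, u ∉ closedNbhd G v) : IsLegalSeq G (l ++ [u]) := by
  have hul : u ∉ l := fun h => hu u h (self_mem_closedNbhd G u)
  refine ⟨hl.1.append (List.nodup_singleton u) (by simpa using hul), fun i => ?_⟩
  have hget : ∀ (j : Fin (l ++ [u]).length) (hj : (j : ℕ) < l.length),
      (l ++ [u]).get j = l.get ⟨j, hj⟩ := fun j hj => by simp [List.getElem_append_left hj]
  by_cases hi : (i : ℕ) < l.length
  · obtain ⟨v, hdom, hfirst⟩ := hl.2 ⟨i, hi⟩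
    exact ⟨v, hget i hi ▸ hdom, fun j hj => hget j (hj.trans hi) ▸ hfirst ⟨j, _⟩ hj⟩
  · have hil : (i : ℕ) = l.length := by
      have := i.isLt
      simp only [List.length_append, List.length_singleton] at this
      omega
    have hlast : (l ++ [u]).get i = u := by simp [hil]
    refine ⟨u, by rw [hlast]; exact self_mem_closedNbhd G u, fun j hj => ?_⟩
    have hjl : (j : ℕ) < l.length := hil ▸ hj
    exact hget j hjl ▸ hu _ (l.get_mem _)

lemma IsLegalSeq.exists_isDomSeq_length_le [Fintype V] {l : List V} (hl : IsLegalSeq G l) :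
    ∃ l', IsDomSeq G l' ∧ l.length ≤ l'.length := by
  by_cases hdom : ∀ u, ∃ v ∈ l, u ∈ closedNbhd G v
  · exact ⟨l, ⟨hl, hdom⟩, le_rfl⟩
  push Not at hdom
  obtain ⟨u, hu⟩ := hdom
  have hl' := hl.append_singleton hu
  have : Fintype.card V - (l ++ [u]).length < Fintype.card V - l.length := by
    have := hl'.1.length_le_card
    simp only [List.length_append, List.length_singleton] at this ⊢
    omega
  obtain ⟨l', hd, hlen⟩ := hl'.exists_isDomSeq_length_le
  simp only [List.length_append, List.length_singleton] at hlen
  exact ⟨l', hd, by omega⟩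
termination_by Fintype.card V - l.length

lemma bddAbove_domSeq_lengths [Fintype V] (G : SimpleGraph V) :
    BddAbove {k : ℕ | ∃ l : List V, IsDomSeq G l ∧ l.length = k} :=
  ⟨Fintype.card V, fun _ ⟨_, hd, hk⟩ => hk ▸ hd.1.1.length_le_card⟩

lemma IsLegalSeq.length_le_grundyDomNum [Fintype V] {l : List V} (hl : IsLegalSeq G l) :
    l.length ≤ grundyDomNum G := by
  obtain ⟨l', hd, hlen⟩ := hl.exists_isDomSeq_length_le
  exact hlen.trans (le_csSup (bddAbove_domSeq_lengths G) ⟨l', hd, rfl⟩)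

lemma exists_isDomSeq_length_eq_grundyDomNum [Fintype V] (G : SimpleGraph V) :
    ∃ l : List V, IsDomSeq G l ∧ l.length = grundyDomNum G := by
  obtain ⟨l, hd, -⟩ := (isLegalSeq_nil (G := G)).exists_isDomSeq_length_le
  exact Nat.sSup_mem (s := {k | ∃ l : List V, IsDomSeq G l ∧ l.length = k}) ⟨_, l, hd, rfl⟩
    (bddAbove_domSeq_lengths G)

lemma grundyDomNum_le_add_of_forall_isLegalSeq [Fintype V] {H : SimpleGraph V} {m : ℕ}
    (h : ∀ l, IsLegalSeq G l → ∃ l', IsLegalSeq H l' ∧ l.length ≤ l'.length + m) :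
    grundyDomNum G ≤ grundyDomNum H + m := by
  obtain ⟨l, hd, hlen⟩ := exists_isDomSeq_length_eq_grundyDomNum G
  obtain ⟨l', hl', hle⟩ := h l hd.1
  have := hl'.length_le_grundyDomNum
  omega

/-- Two footprints lost in passing to `G` would both be endpoints of `e` footprinted by the other
endpoint; the earlier of the two footprinting vertices then dominates the later footprint. -/
lemma IsLegalSeq.exists_isLegalSeq_of_remove_edge {e : Sym2 V} (hle : G ≤ G')
    (hE : G'.edgeSet \ G.edgeSet ⊆ {e}) {l : List V} (hl : IsLegalSeq G' l) :
    ∃ l', IsLegalSeq G l' ∧ l.length ≤ l'.length + 1 := by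
  obtain ⟨hnd, hleg⟩ := hl
  choose w hw using hleg
  have hfirst : ∀ i j, j < i → w i ∉ closedNbhd G (l.get j) :=
    fun i j hj h => (hw i).2 j hj (closedNbhd_mono hle _ h)
  have hlost : ∀ i, ¬ Footprints G l i (w i) → s(l.get i, w i) = e := fun i hi =>
    sym2_eq_of_mem_closedNbhd_of_not_mem hE (hw i).1 fun h => hi ⟨h, hfirst i⟩
  refine exists_isLegalSeq_of_footprints_except_one hnd w fun i₁ i₂ hlt h₁ h₂ => ?_
  rcases Sym2.eq_iff.mp ((hlost i₁ h₁).trans (hlost i₂ h₂).symm) with ⟨hv, -⟩ | ⟨hv, -⟩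
  · exact hlt.ne (hnd.get_inj_iff.mp hv)
  · exact (hw i₂).2 i₁ hlt (by rw [← hv]; exact self_mem_closedNbhd G' _)

/-- Two footprints lost in passing to `G'` would both be endpoints of `e` dominated through `e`
by earlier vertices; either the two footprints coincide, or the later one is an earlier vertex. -/
lemma IsLegalSeq.exists_isLegalSeq_of_add_edge {e : Sym2 V} (hle : G ≤ G')
    (hE : G'.edgeSet \ G.edgeSet ⊆ {e}) {l : List V} (hl : IsLegalSeq G l) :
    ∃ l', IsLegalSeq G' l' ∧ l.length ≤ l'.length + 1 := by
  obtain ⟨hnd, hleg⟩ := hl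
  choose w hw using hleg
  have hlost : ∀ i, ¬ Footprints G' l i (w i) →
      ∃ j < i, s(l.get j, w i) = e := fun i hi => by
    obtain ⟨j, hj, h⟩ : ∃ j < i, w i ∈ closedNbhd G' (l.get j) := by
      by_contra! h
      exact hi ⟨closedNbhd_mono hle _ (hw i).1, h⟩
    exact ⟨j, hj, sym2_eq_of_mem_closedNbhd_of_not_mem hE h ((hw i).2 j hj)⟩
  refine exists_isLegalSeq_of_footprints_except_one hnd w fun i₁ i₂ hlt h₁ h₂ => ?_
  obtain ⟨j₁, hj₁, he₁⟩ := hlost i₁ h₁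
  obtain ⟨j₂, -, he₂⟩ := hlost i₂ h₂
  rcases Sym2.eq_iff.mp (he₁.trans he₂.symm) with ⟨-, hww⟩ | ⟨hv, -⟩
  · exact (hw i₂).2 i₁ hlt (hww ▸ (hw i₁).1)
  · exact (hw i₂).2 j₁ (hj₁.trans hlt) (by rw [← hv]; exact self_mem_closedNbhd G _)

lemma grundyDomNum_le_add_one_of_edgeSet_sdiff_subset [Fintype V] {e : Sym2 V} (hle : G ≤ G')
    (hE : G'.edgeSet \ G.edgeSet ⊆ {e}) :
    grundyDomNum G ≤ grundyDomNum G' + 1 ∧ grundyDomNum G' ≤ grundyDomNum G + 1 :=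
  ⟨grundyDomNum_le_add_of_forall_isLegalSeq fun _ hl =>
      hl.exists_isLegalSeq_of_add_edge hle hE,
    grundyDomNum_le_add_of_forall_isLegalSeq fun _ hl =>
      hl.exists_isLegalSeq_of_remove_edge hle hE⟩

lemma grundyDomNum_le_add_ncard_edgeSet_sdiff [Fintype V] (hle : G ≤ G') :
    grundyDomNum G ≤ grundyDomNum G' + (G'.edgeSet \ G.edgeSet).ncard ∧
      grundyDomNum G' ≤ grundyDomNum G + (G'.edgeSet \ G.edgeSet).ncard := by
  induction hn : (G'.edgeSet \ G.edgeSet).ncard generalizing G' with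
  | zero =>
    have hsub : G'.edgeSet ⊆ G.edgeSet :=
      Set.sdiff_eq_empty.mp ((Set.ncard_eq_zero (Set.toFinite _)).mp hn)
    have : G' = G := le_antisymm (edgeSet_subset_edgeSet.mp hsub) hle
    simp [this]
  | succ n ih =>
    obtain ⟨e, he⟩ := Set.nonempty_of_ncard_ne_zero (s := G'.edgeSet \ G.edgeSet) (by omega)
    set G'' := G'.deleteEdges {e}
    have hle'' : G ≤ G'' := by
      rw [← edgeSet_subset_edgeSet, edgeSet_deleteEdges]
      exact Set.subset_sdiff_singleton (edgeSet_subset_edgeSet.mpr hle) he.2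
    have hdiff : G''.edgeSet \ G.edgeSet = (G'.edgeSet \ G.edgeSet) \ {e} := by
      rw [edgeSet_deleteEdges, sdiff_right_comm]
    have hE : G'.edgeSet \ G''.edgeSet ⊆ {e} := by
      rw [edgeSet_deleteEdges, Set.sdiff_sdiff_cancel_left (Set.singleton_subset_iff.mpr he.1)]
    have hn'' : (G''.edgeSet \ G.edgeSet).ncard = n := by
      rw [hdiff, Set.ncard_sdiff_singleton_of_mem he, hn, Nat.add_sub_cancel]
    obtain ⟨ih₁, ih₂⟩ := ih hle'' hn''
    obtain ⟨h₁, h₂⟩ :=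
      grundyDomNum_le_add_one_of_edgeSet_sdiff_subset (G := G'') (deleteEdges_le {e}) hE
    omega

end

theorem grundy_add_k_edges {V : Type*} [Fintype V] (G G' : SimpleGraph V) (k : ℕ)
    (hle : G ≤ G') (hcard : G'.edgeSet.ncard = G.edgeSet.ncard + k) :
    grundyDomNum G - k ≤ grundyDomNum G' ∧ grundyDomNum G' ≤ grundyDomNum G + k := by
  have hsub : G.edgeSet ⊆ G'.edgeSet := SimpleGraph.edgeSet_subset_edgeSet.mpr hle
  have hk : (G'.edgeSet \ G.edgeSet).ncard = k := by
    rw [Set.ncard_sdiff hsub (Set.toFinite _)]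
    omega
  have := grundyDomNum_le_add_ncard_edgeSet_sdiff hle
  omega
end

section
/- Let G be a finite simple graph and let u be a twin vertex of G, i.e., there exists a vertex v ≠ u with N[u] = N[v]. Then γ_gr(G - u) = γ_gr(G), where G - u is the induced subgraph of G on V(G) \ {u}. -/
/-!
Replacing `u` by its twin `v` preserves the relation `x ∈ N[y]` in both directions. Such a map
carries legal sequences to legal sequences (distinctness comes for free, since a repeated vertex
would footprint nothing new), so a legal dominating sequence of `G` becomes one of `G - u` of the
same length. Conversely every legal dominating sequence of `G - u` is one of `G`, as `u` is
dominated exactly when `v` is.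
-/

section

variable {V W : Type*} {G : SimpleGraph V} {H : SimpleGraph W}

theorem mem_closedNbhd {x y : V} : x ∈ closedNbhd G y ↔ x = y ∨ G.Adj y x := by
  simp [closedNbhd]

theorem mem_closedNbhd_comm {x y : V} : x ∈ closedNbhd G y ↔ y ∈ closedNbhd G x := by
  simp only [mem_closedNbhd, eq_comm, G.adj_comm]

theorem mem_closedNbhd_induce {s : Set V} {x y : s} :
    x ∈ closedNbhd (G.induce s) y ↔ (x : V) ∈ closedNbhd G y := by
  simp [mem_closedNbhd, Subtype.ext_iff]

theorem isLegalSeq_iff {l : List V} :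
    IsLegalSeq G l ↔ ∀ i : Fin l.length, ∃ x ∈ closedNbhd G (l.get i),
      ∀ j : Fin l.length, (j : ℕ) < i → x ∉ closedNbhd G (l.get j) := by
  refine ⟨And.right, fun h => ⟨List.nodup_iff_injective_get.mpr fun i j hij => ?_, h⟩⟩
  by_contra hne
  rcases Fin.lt_or_lt_of_ne hne with hlt | hlt
  · obtain ⟨x, hx, hprev⟩ := h j
    exact hprev i hlt (hij ▸ hx)
  · obtain ⟨x, hx, hprev⟩ := h i
    exact hprev j hlt (hij ▸ hx)

section Map

variable (φ : V → W) (hφ : ∀ x y, φ x ∈ closedNbhd H (φ y) ↔ x ∈ closedNbhd G y)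
include hφ

theorem IsLegalSeq.map {l : List V} (hl : IsLegalSeq G l) : IsLegalSeq H (l.map φ) := by
  rw [isLegalSeq_iff] at hl ⊢
  intro i
  obtain ⟨x, hx, hprev⟩ := hl (i.cast (List.length_map φ))
  refine ⟨φ x, by simpa [hφ] using hx, fun j hj => ?_⟩
  simpa [hφ] using hprev (j.cast (List.length_map φ)) hj

theorem IsDomSeq.map (hdom : ∀ b, ∃ a, ∀ y, a ∈ closedNbhd G y → b ∈ closedNbhd H (φ y))
    {l : List V} (hl : IsDomSeq G l) : IsDomSeq H (l.map φ) := by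
  refine ⟨hl.1.map φ hφ, fun b => ?_⟩
  obtain ⟨a, ha⟩ := hdom b
  obtain ⟨y, hy, hay⟩ := hl.2 a
  exact ⟨φ y, List.mem_map_of_mem hy, ha y hay⟩

theorem setOf_isDomSeq_length_subset
    (hdom : ∀ b, ∃ a, ∀ y, a ∈ closedNbhd G y → b ∈ closedNbhd H (φ y)) :
    {k | ∃ l : List V, IsDomSeq G l ∧ l.length = k} ⊆
      {k | ∃ l : List W, IsDomSeq H l ∧ l.length = k} := by
  rintro _ ⟨l, hl, rfl⟩
  exact ⟨l.map φ, hl.map φ hφ hdom, List.length_map φ⟩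

end Map

section Twins

variable {u v : V} (hvu : v ≠ u)

open Classical in
noncomputable def twinRetraction (w : V) : {w : V | w ≠ u} :=
  if h : w = u then ⟨v, hvu⟩ else ⟨w, h⟩

variable (huv : closedNbhd G u = closedNbhd G v)
include huv

theorem closedNbhd_twinRetraction (w : V) :
    closedNbhd G (twinRetraction hvu w) = closedNbhd G w := by
  unfold twinRetraction
  split_ifs with h
  · rw [h, huv]
  · rfl

theorem twinRetraction_mem_closedNbhd_iff {x y : V} :
    (twinRetraction hvu x : V) ∈ closedNbhd G y ↔ x ∈ closedNbhd G y := by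
  rw [mem_closedNbhd_comm, closedNbhd_twinRetraction hvu huv, mem_closedNbhd_comm]

theorem mem_closedNbhd_induce_twinRetraction_iff {b : {w : V | w ≠ u}} {y : V} :
    b ∈ closedNbhd (G.induce {w | w ≠ u}) (twinRetraction hvu y) ↔ (b : V) ∈ closedNbhd G y := by
  rw [mem_closedNbhd_induce, mem_closedNbhd_comm, twinRetraction_mem_closedNbhd_iff hvu huv,
    mem_closedNbhd_comm]

theorem twinRetraction_mem_closedNbhd_induce_twinRetraction_iff {x y : V} :
    twinRetraction hvu x ∈ closedNbhd (G.induce {w | w ≠ u}) (twinRetraction hvu y) ↔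
      x ∈ closedNbhd G y := by
  rw [mem_closedNbhd_induce_twinRetraction_iff hvu huv, twinRetraction_mem_closedNbhd_iff hvu huv]

end Twins

end

theorem grundy_twin_vertex_deletion_general {V : Type*} (G : SimpleGraph V)
    (u : V)
    (htwin : ∃ v : V, v ≠ u ∧ closedNbhd G u = closedNbhd G v) :
    grundyDomNum (G.induce {v : V | v ≠ u}) = grundyDomNum G := by
  obtain ⟨v, hvu, huv⟩ := htwin
  unfold grundyDomNum
  congr 1
  apply subset_antisymm
  · exact setOf_isDomSeq_length_subset Subtype.val (fun _ _ => mem_closedNbhd_induce.symm)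
      fun b => ⟨twinRetraction hvu b, fun _ hy =>
        (twinRetraction_mem_closedNbhd_iff hvu huv).mp (mem_closedNbhd_induce.mp hy)⟩
  · exact setOf_isDomSeq_length_subset (twinRetraction hvu)
      (fun _ _ => twinRetraction_mem_closedNbhd_induce_twinRetraction_iff hvu huv)
      fun b => ⟨b, fun _ => (mem_closedNbhd_induce_twinRetraction_iff hvu huv).mpr⟩

theorem grundy_twin_vertex_deletion {V : Type*} [Fintype V] (G : SimpleGraph V)
    (u : V)
    (htwin : ∃ v : V, v ≠ u ∧ closedNbhd G u = closedNbhd G v) :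
    grundyDomNum (G.induce {v : V | v ≠ u}) = grundyDomNum G :=
  grundy_twin_vertex_deletion_general G u htwin
end
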